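/- arXiv:2506.06515 — 3 statements merged into one kernel-verified Lean document; each statement's English description precedes it below -/
import Mathlib

section
/- Combining the two previous identities: if ℓ = a + 2Bv, ℓ± = a± + 2B± v±, a = a⁺ ∗ a⁻, B = B⁺ ∗ B⁻, and the splicing compatibility holds, then ⟨ℓ,ℓ⟩ = ⟨a,a⟩ − ⟨a⁺,a⁺⟩ − ⟨a⁻,a⁻⟩ + ⟨ℓ⁺,ℓ⁺⟩ + ⟨ℓ⁻,ℓ⁻⟩, where each ⟨·,·⟩ is the pairing twisted by the inverse of the respective framing matrix. -/
open Finset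

/-- The spliced matrix `B = B⁺ ∗ B⁻` over `ℚ`. -/
def spliceMatQ {m n : ℕ} (Bp : Matrix (Fin m ⊕ Unit) (Fin m ⊕ Unit) ℚ)
    (Bm : Matrix (Unit ⊕ Fin n) (Unit ⊕ Fin n) ℚ) :
    Matrix (Fin m ⊕ Unit ⊕ Fin n) (Fin m ⊕ Unit ⊕ Fin n) ℚ :=
  fun i j =>
    match i, j with
    | Sum.inl i, Sum.inl j => Bp (Sum.inl i) (Sum.inl j)
    | Sum.inl i, Sum.inr (Sum.inl u) => Bp (Sum.inl i) (Sum.inr u)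
    | Sum.inl _, Sum.inr (Sum.inr _) => 0
    | Sum.inr (Sum.inl u), Sum.inl j => Bp (Sum.inr u) (Sum.inl j)
    | Sum.inr (Sum.inl u), Sum.inr (Sum.inl u') =>
        Bp (Sum.inr u) (Sum.inr u') + Bm (Sum.inl u) (Sum.inl u')
    | Sum.inr (Sum.inl u), Sum.inr (Sum.inr j) => Bm (Sum.inl u) (Sum.inr j)
    | Sum.inr (Sum.inr _), Sum.inl _ => 0
    | Sum.inr (Sum.inr i), Sum.inr (Sum.inl u) => Bm (Sum.inr i) (Sum.inl u)
    | Sum.inr (Sum.inr i), Sum.inr (Sum.inr j) => Bm (Sum.inr i) (Sum.inr j)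

/-- Splice of vectors, adding the overlapping coordinate: `a⁺ ∗ a⁻`. -/
def spliceVecAdd {Q : Type*} [Add Q] {m n : ℕ}
    (ap : Fin m ⊕ Unit → Q) (am : Unit ⊕ Fin n → Q) :
    Fin m ⊕ Unit ⊕ Fin n → Q :=
  fun i =>
    match i with
    | Sum.inl i => ap (Sum.inl i)
    | Sum.inr (Sum.inl _) => ap (Sum.inr ()) + am (Sum.inl ())
    | Sum.inr (Sum.inr j) => am (Sum.inr j)

/-- Splice of vectors with agreeing shared coordinate, not doubled. -/
def spliceVecShared {Q : Type*} {m n : ℕ}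
    (vp : Fin m ⊕ Unit → Q) (vm : Unit ⊕ Fin n → Q) :
    Fin m ⊕ Unit ⊕ Fin n → Q :=
  fun i =>
    match i with
    | Sum.inl i => vp (Sum.inl i)
    | Sum.inr (Sum.inl _) => vp (Sum.inr ())
    | Sum.inr (Sum.inr j) => vm (Sum.inr j)

/-- The pairing on `Q^ι` twisted by the inverse of the framing matrix `M`:
`⟨x,y⟩_M := ∑_{i,j} (M⁻¹)_{ij} ⟨x_i, y_j⟩`. -/
noncomputable def twistedPair {Q : Type*} [AddCommGroup Q] [Module ℚ Q]
    (bil : Q →ₗ[ℚ] Q →ₗ[ℚ] ℚ) {ι : Type*} [Fintype ι] [DecidableEq ι]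
    (M : Matrix ι ι ℚ) (x y : ι → Q) : ℚ :=
  ∑ i, ∑ j, M⁻¹ i j * bil (x i) (y j)

/-! Pairing against `M v` cancels the twist: `⟨x, M v⟩_M = ∑ᵢ bil (xᵢ) (vᵢ)` for invertible `M`,
and `⟨M v, y⟩_M = ∑ᵢ bil (vᵢ) (yᵢ)` if moreover `M` is symmetric. Expanding `ℓ = a + 2 M v`
therefore gives `⟨ℓ,ℓ⟩_M - ⟨a,a⟩_M = 2 ∑ᵢ (bil aᵢ vᵢ + bil vᵢ aᵢ) + 4 ∑ᵢⱼ Mᵢⱼ bil vᵢ vⱼ`, in which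
`M⁻¹` no longer occurs. Both sums split over a splice, because `a⁺ ∗ a⁻` and `B⁺ ∗ B⁻` add the two
contributions exactly at the shared coordinate, where `v⁺` and `v⁻` agree. -/

section TwistedPair

open Matrix

variable {Q : Type*} [AddCommGroup Q] [Module ℚ Q] (bil : Q →ₗ[ℚ] Q →ₗ[ℚ] ℚ)
  {ι : Type*} [Fintype ι] [DecidableEq ι] {M : Matrix ι ι ℚ}

theorem twistedPair_add_left (x x' y : ι → Q) :
    twistedPair bil M (x + x') y = twistedPair bil M x y + twistedPair bil M x' y := by
  simp only [twistedPair, Pi.add_apply, map_add, LinearMap.add_apply, mul_add,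
    Finset.sum_add_distrib]

theorem twistedPair_add_right (x y y' : ι → Q) :
    twistedPair bil M x (y + y') = twistedPair bil M x y + twistedPair bil M x y' := by
  simp only [twistedPair, Pi.add_apply, map_add, mul_add, Finset.sum_add_distrib]

theorem twistedPair_flip_transpose (x y : ι → Q) :
    twistedPair bil.flip Mᵀ y x = twistedPair bil M x y := by
  rw [twistedPair, twistedPair, Finset.sum_comm, ← transpose_nonsing_inv]
  rfl

theorem twistedPair_mul_smul_right (hM : IsUnit M.det) (c : ℚ) (x v : ι → Q) :
    twistedPair bil M x (fun i => ∑ j, (c * M i j) • v j) = c * ∑ i, bil (x i) (v i) := by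
  calc twistedPair bil M x (fun i => ∑ j, (c * M i j) • v j)
      = ∑ i, ∑ k, c * (M⁻¹ * M) i k * bil (x i) (v k) := by
        simp only [twistedPair, map_sum, map_smul, smul_eq_mul, mul_apply,
          Finset.mul_sum, Finset.sum_mul]
        refine Finset.sum_congr rfl fun i _ => ?_
        rw [Finset.sum_comm]
        exact Finset.sum_congr rfl fun k _ => Finset.sum_congr rfl fun j _ => by ring
    _ = c * ∑ i, bil (x i) (v i) := by
        simp [nonsing_inv_mul M hM, one_apply, Finset.mul_sum]

theorem twistedPair_mul_smul_left (hMs : M.IsSymm) (hM : IsUnit M.det) (c : ℚ)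
    (v y : ι → Q) :
    twistedPair bil M (fun i => ∑ j, (c * M i j) • v j) y = c * ∑ i, bil (v i) (y i) := by
  rw [← twistedPair_flip_transpose, hMs.eq, twistedPair_mul_smul_right _ hM]
  rfl

theorem twistedPair_of_eq_add_two_mul_smul (hMs : M.IsSymm) (hM : IsUnit M.det)
    (a v ℓ : ι → Q) (hℓ : ∀ i, ℓ i = a i + ∑ j, (2 * M i j) • v j) :
    twistedPair bil M ℓ ℓ =
      twistedPair bil M a a + 2 * ∑ i, (bil (a i) (v i) + bil (v i) (a i))
        + 4 * ∑ i, ∑ j, M i j * bil (v i) (v j) := by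
  set s : ι → Q := fun i => ∑ j, (2 * M i j) • v j
  obtain rfl : ℓ = a + s := funext hℓ
  have hss : twistedPair bil M s s = 4 * ∑ i, ∑ j, M i j * bil (v i) (v j) := by
    rw [twistedPair_mul_smul_left bil hMs hM]
    simp only [s, map_sum, map_smul, smul_eq_mul, Finset.mul_sum]
    exact Finset.sum_congr rfl fun i _ => Finset.sum_congr rfl fun j _ => by ring
  rw [twistedPair_add_left, twistedPair_add_right, twistedPair_add_right, hss,
    twistedPair_mul_smul_right bil hM, twistedPair_mul_smul_left bil hMs hM,
    Finset.sum_add_distrib]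
  ring

end TwistedPair

section Splice

variable {m n : ℕ}

theorem spliceMatQ_isSymm {Bp : Matrix (Fin m ⊕ Unit) (Fin m ⊕ Unit) ℚ}
    {Bm : Matrix (Unit ⊕ Fin n) (Unit ⊕ Fin n) ℚ} (hBp : Bp.IsSymm) (hBm : Bm.IsSymm) :
    (spliceMatQ Bp Bm).IsSymm := by
  ext i j
  rcases i with i | _ | i <;> rcases j with j | _ | j <;>
    simp only [Matrix.transpose_apply, spliceMatQ, hBp.apply, hBm.apply]

theorem sum_spliceVecAdd_spliceVecShared {Q R : Type*} [Add Q] [AddCommMonoid R]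
    (g : Q → Q → R) (hg : ∀ x x' y, g (x + x') y = g x y + g x' y)
    (ap : Fin m ⊕ Unit → Q) (am : Unit ⊕ Fin n → Q)
    (vp : Fin m ⊕ Unit → Q) (vm : Unit ⊕ Fin n → Q)
    (hshare : vp (Sum.inr ()) = vm (Sum.inl ())) :
    ∑ i, g (spliceVecAdd ap am i) (spliceVecShared vp vm i) =
      ∑ i, g (ap i) (vp i) + ∑ i, g (am i) (vm i) := by
  simp only [Fintype.sum_sum_type, Finset.univ_unique, Finset.sum_singleton, spliceVecAdd,
    spliceVecShared, hg, ← hshare]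
  abel

theorem sum_spliceMatQ_mul_spliceVecShared {Q : Type*} (f : Q → Q → ℚ)
    (Bp : Matrix (Fin m ⊕ Unit) (Fin m ⊕ Unit) ℚ) (Bm : Matrix (Unit ⊕ Fin n) (Unit ⊕ Fin n) ℚ)
    (vp : Fin m ⊕ Unit → Q) (vm : Unit ⊕ Fin n → Q)
    (hshare : vp (Sum.inr ()) = vm (Sum.inl ())) :
    ∑ i, ∑ j, spliceMatQ Bp Bm i j * f (spliceVecShared vp vm i) (spliceVecShared vp vm j) =
      ∑ i, ∑ j, Bp i j * f (vp i) (vp j) + ∑ i, ∑ j, Bm i j * f (vm i) (vm j) := by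
  simp only [Fintype.sum_sum_type, Finset.univ_unique, Finset.sum_singleton, spliceMatQ,
    spliceVecShared, zero_mul, add_mul, Finset.sum_const_zero, Finset.sum_add_distrib, hshare]
  abel

end Splice

theorem gluing_pairing_identity_general
    {Q : Type*} [AddCommGroup Q] [Module ℚ Q]
    (bil : Q →ₗ[ℚ] Q →ₗ[ℚ] ℚ)
    {m n : ℕ}
    (Bp : Matrix (Fin m ⊕ Unit) (Fin m ⊕ Unit) ℚ)
    (Bm : Matrix (Unit ⊕ Fin n) (Unit ⊕ Fin n) ℚ)
    (hBp : Bp.IsSymm) (hBm : Bm.IsSymm)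
    (hup : IsUnit Bp.det) (hum : IsUnit Bm.det)
    (hu : IsUnit (spliceMatQ Bp Bm).det)
    (ap : Fin m ⊕ Unit → Q) (am : Unit ⊕ Fin n → Q)
    (vp : Fin m ⊕ Unit → Q) (vm : Unit ⊕ Fin n → Q)
    (hshare : vp (Sum.inr ()) = vm (Sum.inl ()))
    (a : Fin m ⊕ Unit ⊕ Fin n → Q) (ha : a = spliceVecAdd ap am)
    (v : Fin m ⊕ Unit ⊕ Fin n → Q) (hv : v = spliceVecShared vp vm)
    (ℓ : Fin m ⊕ Unit ⊕ Fin n → Q)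
    (hℓ : ∀ i, ℓ i = a i + ∑ j, (2 * spliceMatQ Bp Bm i j) • v j)
    (ℓp : Fin m ⊕ Unit → Q)
    (hℓp : ∀ i, ℓp i = ap i + ∑ j, (2 * Bp i j) • vp j)
    (ℓm : Unit ⊕ Fin n → Q)
    (hℓm : ∀ i, ℓm i = am i + ∑ j, (2 * Bm i j) • vm j) :
    twistedPair bil (spliceMatQ Bp Bm) ℓ ℓ =
      twistedPair bil (spliceMatQ Bp Bm) a a
        - twistedPair bil Bp ap ap - twistedPair bil Bm am am
        + twistedPair bil Bp ℓp ℓp + twistedPair bil Bm ℓm ℓm := by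
  subst ha hv
  rw [twistedPair_of_eq_add_two_mul_smul bil (spliceMatQ_isSymm hBp hBm) hu _ _ ℓ hℓ,
    twistedPair_of_eq_add_two_mul_smul bil hBp hup ap vp ℓp hℓp,
    twistedPair_of_eq_add_two_mul_smul bil hBm hum am vm ℓm hℓm,
    sum_spliceMatQ_mul_spliceVecShared (fun x y => bil x y) Bp Bm vp vm hshare,
    sum_spliceVecAdd_spliceVecShared (fun x y => bil x y + bil y x)
      (fun x x' y => by simp only [map_add, LinearMap.add_apply]; abel) ap am vp vm hshare]
  ring

/-- Gluing identity for twisted pairings.  With symmetric invertible framing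
matrices `B⁺`, `B⁻` and their (invertible) splice `B = B⁺ ∗ B⁻`, spliced
`Spin^c`-representatives `a = a⁺ ∗ a⁻`, a spliced shift vector `v = v⁺ ∗ v⁻`
(with shared coordinate `γ`), and `ℓ = a + 2Bv`, `ℓ± = a± + 2B±v±`, one has
`⟨ℓ,ℓ⟩ = ⟨a,a⟩ − ⟨a⁺,a⁺⟩ − ⟨a⁻,a⁻⟩ + ⟨ℓ⁺,ℓ⁺⟩ + ⟨ℓ⁻,ℓ⁻⟩`, where each pairing is
twisted by the inverse of the respective framing matrix. -/
theorem gluing_pairing_identity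
    {Q : Type*} [AddCommGroup Q] [Module ℚ Q]
    (bil : Q →ₗ[ℚ] Q →ₗ[ℚ] ℚ) (hsymm : ∀ x y, bil x y = bil y x)
    {m n : ℕ}
    (Bp : Matrix (Fin m ⊕ Unit) (Fin m ⊕ Unit) ℚ)
    (Bm : Matrix (Unit ⊕ Fin n) (Unit ⊕ Fin n) ℚ)
    (hBp : Bp.IsSymm) (hBm : Bm.IsSymm)
    (hup : IsUnit Bp.det) (hum : IsUnit Bm.det)
    (hu : IsUnit (spliceMatQ Bp Bm).det)
    (ap : Fin m ⊕ Unit → Q) (am : Unit ⊕ Fin n → Q)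
    (vp : Fin m ⊕ Unit → Q) (vm : Unit ⊕ Fin n → Q)
    (hshare : vp (Sum.inr ()) = vm (Sum.inl ()))
    (a : Fin m ⊕ Unit ⊕ Fin n → Q) (ha : a = spliceVecAdd ap am)
    (v : Fin m ⊕ Unit ⊕ Fin n → Q) (hv : v = spliceVecShared vp vm)
    (ℓ : Fin m ⊕ Unit ⊕ Fin n → Q)
    (hℓ : ∀ i, ℓ i = a i + ∑ j, (2 * spliceMatQ Bp Bm i j) • v j)
    (ℓp : Fin m ⊕ Unit → Q)
    (hℓp : ∀ i, ℓp i = ap i + ∑ j, (2 * Bp i j) • vp j)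
    (ℓm : Unit ⊕ Fin n → Q)
    (hℓm : ∀ i, ℓm i = am i + ∑ j, (2 * Bm i j) • vm j) :
    twistedPair bil (spliceMatQ Bp Bm) ℓ ℓ =
      twistedPair bil (spliceMatQ Bp Bm) a a
        - twistedPair bil Bp ap ap - twistedPair bil Bm am am
        + twistedPair bil Bp ℓp ℓp + twistedPair bil Bm ℓm ℓm :=
  gluing_pairing_identity_general bil Bp Bm hBp hBm hup hum hu ap am vp vm hshare a ha v hv ℓ hℓ ℓp
    hℓp ℓm hℓm
end

section
/- Let B_1 be an invertible symmetric n×n rational matrix and B_2 an invertible symmetric m×m rational matrix. Form the (n+m+2)×(n+m+2) symmetric matrix B_∘ with block structure corresponding to the splitting move: B_∘ has a vertex of weight e connected to a vertex of weight 0 and to the first basis vectors of the B_1 and B_2 blocks. Then the number of positive eigenvalues satisfies π(B_∘) = 1 + π(B_1) + π(B_2), the signature satisfies σ(B_∘) = σ(B_1) + σ(B_2), and tr(B_∘) = e + tr(B_1) + tr(B_2). -/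
open Finset

/-- Index type for the splitting-move matrix: the basis is ordered as
`(v₀, v_e, basis of the B₁ block, basis of the B₂ block)`. -/
abbrev SplitIdx (n m : ℕ) := (Unit ⊕ Unit) ⊕ (Fin (n + 1) ⊕ Fin (m + 1))

/-- The symmetric matrix `B_∘` of the splitting move: a vertex `v_e` of weight `e`
connected to a vertex `v₀` of weight `0` and to the first basis vectors of the
`B₁` and `B₂` blocks; the blocks `B₁`, `B₂` are embedded unchanged and all other
entries vanish. -/
def splitMat {n m : ℕ} (e : ℝ) (B1 : Matrix (Fin (n + 1)) (Fin (n + 1)) ℝ)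
    (B2 : Matrix (Fin (m + 1)) (Fin (m + 1)) ℝ) :
    Matrix (SplitIdx n m) (SplitIdx n m) ℝ :=
  fun i j =>
    match i, j with
    | Sum.inl (Sum.inl _), Sum.inl (Sum.inl _) => 0
    | Sum.inl (Sum.inl _), Sum.inl (Sum.inr _) => 1
    | Sum.inl (Sum.inr _), Sum.inl (Sum.inl _) => 1
    | Sum.inl (Sum.inr _), Sum.inl (Sum.inr _) => e
    | Sum.inl (Sum.inl _), Sum.inr _ => 0
    | Sum.inr _, Sum.inl (Sum.inl _) => 0
    | Sum.inl (Sum.inr _), Sum.inr (Sum.inl k) => if k = 0 then 1 else 0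
    | Sum.inl (Sum.inr _), Sum.inr (Sum.inr k) => if k = 0 then 1 else 0
    | Sum.inr (Sum.inl k), Sum.inl (Sum.inr _) => if k = 0 then 1 else 0
    | Sum.inr (Sum.inr k), Sum.inl (Sum.inr _) => if k = 0 then 1 else 0
    | Sum.inr (Sum.inl k), Sum.inr (Sum.inl l) => B1 k l
    | Sum.inr (Sum.inr k), Sum.inr (Sum.inr l) => B2 k l
    | Sum.inr (Sum.inl _), Sum.inr (Sum.inr _) => 0
    | Sum.inr (Sum.inr _), Sum.inr (Sum.inl _) => 0

open scoped Classical in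
/-- `π(A)`: the number of positive eigenvalues (with multiplicity) of a real
symmetric (Hermitian) matrix. -/
noncomputable def posEig {ι : Type*} [Fintype ι] [DecidableEq ι]
    {A : Matrix ι ι ℝ} (hA : A.IsHermitian) : ℕ :=
  (Finset.univ.filter fun i => 0 < hA.eigenvalues i).card

open scoped Classical in
/-- `σ(A)`: the signature, number of positive minus number of negative eigenvalues. -/
noncomputable def sigEig {ι : Type*} [Fintype ι] [DecidableEq ι]
    {A : Matrix ι ι ℝ} (hA : A.IsHermitian) : ℤ :=
  ((Finset.univ.filter fun i => 0 < hA.eigenvalues i).card : ℤ) -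
    ((Finset.univ.filter fun i => hA.eigenvalues i < 0).card : ℤ)


/-!
By Sylvester's law of inertia, the numbers of positive and of negative eigenvalues of a real
symmetric matrix are those of any diagonal matrix congruent to it. The substitution
`x₀ ↦ x₀ + y₀ + z₀` (where `y₀`, `z₀` are the first coordinates of the two blocks) absorbs the
edges from `v_e` into the blocks: it turns `B_∘` into the block diagonal matrix
`[[0, 1], [1, e]] ⊕ B₁ ⊕ B₂`, and `[[0, 1], [1, e]]` is congruent to `diag(1, -1)` whatever `e` is.
So `B_∘` gains exactly one positive and one negative eigenvalue over `B₁ ⊕ B₂`.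
-/

open Matrix Finset

section Inertia

variable {ι κ : Type*} [Fintype ι] [Fintype κ]

lemma dotProduct_diagonal_mulVec_self [DecidableEq ι] (d x : ι → ℝ) :
    x ⬝ᵥ diagonal d *ᵥ x = ∑ i, d i * x i ^ 2 :=
  Finset.sum_congr rfl fun i _ => by rw [mulVec_diagonal]; ring

lemma dotProduct_transpose_mul_mul_mulVec {R : Type*} [CommSemiring R] (A : Matrix ι ι R)
    (P : Matrix ι κ R) (x : κ → R) :
    x ⬝ᵥ (Pᵀ * A * P) *ᵥ x = (P *ᵥ x) ⬝ᵥ A *ᵥ (P *ᵥ x) := by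
  rw [← mulVec_mulVec, ← mulVec_mulVec, dotProduct_mulVec, vecMul_transpose]

theorem card_pos_le_of_transpose_mul_diagonal_mul [DecidableEq ι] [DecidableEq κ]
    {d : ι → ℝ} {d' : κ → ℝ} (P : Matrix ι κ ℝ) (h : Pᵀ * diagonal d * P = diagonal d') :
    #{j | 0 < d' j} ≤ #{i | 0 < d i} := by
  -- `φ` is injective: on its kernel `0 ≤ ∑ d' j x_j² = ∑ d i (P x)_i² ≤ 0`.
  let φ : (κ → ℝ) →ₗ[ℝ] ({i // 0 < d i} → ℝ) × ({j // ¬ 0 < d' j} → ℝ) :=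
    (LinearMap.funLeft ℝ ℝ Subtype.val ∘ₗ P.mulVecLin).prod (LinearMap.funLeft ℝ ℝ Subtype.val)
  have hφ : Function.Injective φ := by
    rw [← LinearMap.ker_eq_bot, LinearMap.ker_eq_bot']
    intro x hx
    have hPx : ∀ i, 0 < d i → (P *ᵥ x) i = 0 := fun i hi =>
      congr_fun (congr_arg Prod.fst hx) ⟨i, hi⟩
    replace hx : ∀ j, ¬ 0 < d' j → x j = 0 := fun j hj =>
      congr_fun (congr_arg Prod.snd hx) ⟨j, hj⟩
    have hquad : ∑ j, d' j * x j ^ 2 = ∑ i, d i * (P *ᵥ x) i ^ 2 := by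
      rw [← dotProduct_diagonal_mulVec_self, ← dotProduct_diagonal_mulVec_self, ← h,
        dotProduct_transpose_mul_mul_mulVec]
    have hnonneg : ∀ j ∈ univ, 0 ≤ d' j * x j ^ 2 := fun j _ => by
      by_cases hj : 0 < d' j
      · positivity
      · simp [hx j hj]
    have hnonpos : ∑ i, d i * (P *ᵥ x) i ^ 2 ≤ 0 := sum_nonpos fun i _ => by
      by_cases hi : 0 < d i
      · simp [hPx i hi]
      · exact mul_nonpos_of_nonpos_of_nonneg (not_lt.1 hi) (sq_nonneg _)
    have hzero := (sum_eq_zero_iff_of_nonneg hnonneg).1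
      (le_antisymm (hquad ▸ hnonpos) (sum_nonneg hnonneg))
    funext j
    by_cases hj : 0 < d' j
    · simpa [hj.ne'] using hzero j (mem_univ j)
    · exact hx j hj
  have hdim := LinearMap.finrank_le_finrank_of_injective hφ
  simp only [Module.finrank_prod, Module.finrank_fintype_fun_eq_card, Fintype.card_subtype] at hdim
  have := card_filter_add_card_filter_not (s := univ) fun j => 0 < d' j
  simp only [card_univ] at this
  omega

variable [DecidableEq ι]

def IsCongrDiagonal (A : Matrix ι ι ℝ) (d : ι → ℝ) : Prop :=
  ∃ P : Matrix ι ι ℝ, IsUnit P ∧ Pᵀ * A * P = diagonal d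

namespace IsCongrDiagonal

variable {A : Matrix ι ι ℝ} {d d' : ι → ℝ}

lemma card_pos_le (hd : IsCongrDiagonal A d) (hd' : IsCongrDiagonal A d') :
    #{i | 0 < d' i} ≤ #{i | 0 < d i} := by
  obtain ⟨P, hP, hPA⟩ := hd
  obtain ⟨Q, -, hQA⟩ := hd'
  have hPP : P * P⁻¹ = 1 := mul_nonsing_inv P ((isUnit_iff_isUnit_det P).1 hP)
  refine card_pos_le_of_transpose_mul_diagonal_mul (P⁻¹ * Q) ?_
  calc (P⁻¹ * Q)ᵀ * diagonal d * (P⁻¹ * Q) = Qᵀ * (P * P⁻¹)ᵀ * A * (P * P⁻¹) * Q := by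
        simp only [← hPA, transpose_mul, Matrix.mul_assoc]
    _ = diagonal d' := by rw [hPP, transpose_one, Matrix.mul_one, Matrix.mul_one, hQA]

lemma card_pos_eq (hd : IsCongrDiagonal A d) (hd' : IsCongrDiagonal A d') :
    #{i | 0 < d i} = #{i | 0 < d' i} :=
  (hd'.card_pos_le hd).antisymm (hd.card_pos_le hd')

lemma neg (hd : IsCongrDiagonal A d) : IsCongrDiagonal (-A) (-d) := by
  obtain ⟨P, hP, hPA⟩ := hd
  exact ⟨P, hP, by rw [Matrix.mul_neg, Matrix.neg_mul, hPA, diagonal_neg]; rfl⟩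

lemma card_neg_eq (hd : IsCongrDiagonal A d) (hd' : IsCongrDiagonal A d') :
    #{i | d i < 0} = #{i | d' i < 0} := by
  simpa only [Pi.neg_apply, neg_pos] using hd.neg.card_pos_eq hd'.neg

lemma transpose_mul_mul {S : Matrix ι ι ℝ} (hS : IsUnit S) (h : IsCongrDiagonal A d) :
    IsCongrDiagonal (Sᵀ * A * S) d := by
  obtain ⟨P, hP, hPA⟩ := h
  have hSS : S * S⁻¹ = 1 := mul_nonsing_inv S ((isUnit_iff_isUnit_det S).1 hS)
  refine ⟨S⁻¹ * P, (isUnit_nonsing_inv_iff.2 hS).mul hP, ?_⟩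
  calc (S⁻¹ * P)ᵀ * (Sᵀ * A * S) * (S⁻¹ * P) = Pᵀ * (S * S⁻¹)ᵀ * A * (S * S⁻¹) * P := by
        simp only [transpose_mul, Matrix.mul_assoc]
    _ = diagonal d := by rw [hSS, transpose_one, Matrix.mul_one, Matrix.mul_one, hPA]

lemma fromBlocks [DecidableEq κ] {B : Matrix κ κ ℝ} {b : κ → ℝ}
    (hA : IsCongrDiagonal A d) (hB : IsCongrDiagonal B b) :
    IsCongrDiagonal (fromBlocks A 0 0 B) (Sum.elim d b) := by
  obtain ⟨P, hP, hPA⟩ := hA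
  obtain ⟨Q, hQ, hQB⟩ := hB
  refine ⟨Matrix.fromBlocks P 0 0 Q, ?_, ?_⟩
  · rw [isUnit_iff_isUnit_det, det_fromBlocks_zero₂₁]
    exact ((isUnit_iff_isUnit_det P).1 hP).mul ((isUnit_iff_isUnit_det Q).1 hQ)
  · simp [fromBlocks_transpose, fromBlocks_multiply, hPA, hQB, fromBlocks_diagonal]

end IsCongrDiagonal

lemma Matrix.IsHermitian.isCongrDiagonal_eigenvalues {A : Matrix ι ι ℝ} (hA : A.IsHermitian) :
    IsCongrDiagonal A hA.eigenvalues := by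
  refine ⟨hA.eigenvectorUnitary, Unitary.isUnit_coe, ?_⟩
  simpa [Unitary.conjStarAlgAut_star_apply, star_eq_conjTranspose] using
    hA.conjStarAlgAut_star_eigenvectorUnitary

lemma posEig_eq_card_of_isCongrDiagonal {A : Matrix ι ι ℝ} (hA : A.IsHermitian) {d : ι → ℝ}
    (hd : IsCongrDiagonal A d) :
    posEig hA = #{i | 0 < d i} :=
  hA.isCongrDiagonal_eigenvalues.card_pos_eq hd

lemma sigEig_eq_of_isCongrDiagonal {A : Matrix ι ι ℝ} (hA : A.IsHermitian) {d : ι → ℝ}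
    (hd : IsCongrDiagonal A d) :
    sigEig hA = (#{i | 0 < d i} : ℤ) - #{i | d i < 0} := by
  rw [sigEig, hA.isCongrDiagonal_eigenvalues.card_pos_eq hd,
    hA.isCongrDiagonal_eigenvalues.card_neg_eq hd]

end Inertia

lemma card_filter_sum_elim {α β γ : Type*} [Fintype α] [Fintype β] (p : γ → Prop)
    [DecidablePred p] (f : α → γ) (g : β → γ) :
    #{x | p (Sum.elim f g x)} = #{a | p (f a)} + #{b | p (g b)} := by
  simp only [card_filter, Fintype.sum_sum_type]
  rfl

section Shear

variable {l o R : Type*} [Fintype l] [Fintype o] [DecidableEq l] [DecidableEq o] [CommRing R]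

theorem fromBlocks_shear_transpose_mul_mul (A : Matrix l l R) (B : Matrix o o R)
    (F : Matrix l o R) :
    (fromBlocks 1 F 0 1)ᵀ * fromBlocks A 0 0 B * fromBlocks 1 F 0 1 =
      fromBlocks A (A * F) (Fᵀ * A) (Fᵀ * A * F + B) := by
  simp [fromBlocks_transpose, fromBlocks_multiply, Matrix.mul_assoc]

lemma isUnit_fromBlocks_shear (F : Matrix l o R) :
    IsUnit (fromBlocks (1 : Matrix l l R) F 0 (1 : Matrix o o R)) := by
  simp [isUnit_iff_isUnit_det]

end Shear

section Splitting

def splitEdge (e : ℝ) : Matrix (Unit ⊕ Unit) (Unit ⊕ Unit) ℝ :=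
  fromBlocks 0 1 1 (of fun _ _ => e)

/-- The row `v₀` of the substitution `x₀ ↦ x₀ + y₀ + z₀`. -/
def splitShear (n m : ℕ) : Matrix (Unit ⊕ Unit) (Fin (n + 1) ⊕ Fin (m + 1)) ℝ :=
  fromRows (replicateRow Unit (Sum.elim (Pi.single 0 1) (Pi.single 0 1))) 0

variable {n m : ℕ} (e : ℝ) (B1 : Matrix (Fin (n + 1)) (Fin (n + 1)) ℝ)
  (B2 : Matrix (Fin (m + 1)) (Fin (m + 1)) ℝ)

theorem splitMat_eq_fromBlocks :
    splitMat e B1 B2 = fromBlocks (splitEdge e) (splitEdge e * splitShear n m)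
      ((splitShear n m)ᵀ * splitEdge e)
      ((splitShear n m)ᵀ * splitEdge e * splitShear n m + fromBlocks B1 0 0 B2) := by
  ext (((⟨⟩ | ⟨⟩) | (i | i))) (((⟨⟩ | ⟨⟩) | (j | j))) <;>
    simp [splitMat, splitEdge, splitShear, Matrix.mul_apply, Fintype.sum_sum_type, Pi.single_apply]

lemma isCongrDiagonal_splitEdge : IsCongrDiagonal (splitEdge e) (Sum.elim 1 (-1)) := by
  refine ⟨fromBlocks (of fun _ _ => (1 - e) / 2) (of fun _ _ => -(1 + e) / 2) 1 1, ?_, ?_⟩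
  · rw [isUnit_iff_isUnit_det, det_fromBlocks_one₂₂, det_unique]
    convert isUnit_one
    simp only [Matrix.mul_one, Matrix.sub_apply, of_apply]
    ring
  · ext (⟨⟩ | ⟨⟩) (⟨⟩ | ⟨⟩) <;> simp [splitEdge, Matrix.mul_apply, Fintype.sum_sum_type] <;> ring

variable {B1 B2}

lemma isCongrDiagonal_splitMat (h1 : B1.IsHermitian) (h2 : B2.IsHermitian) :
    IsCongrDiagonal (splitMat e B1 B2)
      (Sum.elim (Sum.elim 1 (-1)) (Sum.elim h1.eigenvalues h2.eigenvalues)) := by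
  rw [splitMat_eq_fromBlocks, ← fromBlocks_shear_transpose_mul_mul]
  exact ((isCongrDiagonal_splitEdge e).fromBlocks (h1.isCongrDiagonal_eigenvalues.fromBlocks
    h2.isCongrDiagonal_eigenvalues)).transpose_mul_mul (isUnit_fromBlocks_shear _)

variable (B1 B2)

lemma trace_splitMat : (splitMat e B1 B2).trace = e + B1.trace + B2.trace := by
  simp [trace, splitMat, Fintype.sum_sum_type, add_assoc]

end Splitting

theorem splitMat_pos_sig_trace_general {n m : ℕ} (e : ℝ)
    (B1 : Matrix (Fin (n + 1)) (Fin (n + 1)) ℝ)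
    (B2 : Matrix (Fin (m + 1)) (Fin (m + 1)) ℝ)
    (h1 : B1.IsHermitian) (h2 : B2.IsHermitian)
    (hc : (splitMat e B1 B2).IsHermitian) :
    posEig hc = 1 + posEig h1 + posEig h2 ∧
      sigEig hc = sigEig h1 + sigEig h2 ∧
      (splitMat e B1 B2).trace = e + B1.trace + B2.trace := by
  have hdiag := isCongrDiagonal_splitMat e h1 h2
  refine ⟨?_, ?_, trace_splitMat e B1 B2⟩
  · rw [posEig_eq_card_of_isCongrDiagonal hc hdiag]
    simp only [card_filter_sum_elim (fun x : ℝ => 0 < x)]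
    norm_num [posEig, add_assoc]
  · rw [sigEig_eq_of_isCongrDiagonal hc hdiag]
    simp only [card_filter_sum_elim (fun x : ℝ => 0 < x), card_filter_sum_elim (fun x : ℝ => x < 0)]
    norm_num [sigEig]
    omega

/-- For invertible symmetric real matrices `B₁`, `B₂` and the splitting-move
matrix `B_∘`, the number of positive eigenvalues satisfies
`π(B_∘) = 1 + π(B₁) + π(B₂)`, the signature satisfies
`σ(B_∘) = σ(B₁) + σ(B₂)`, and `tr(B_∘) = e + tr(B₁) + tr(B₂)`. -/
theorem splitMat_pos_sig_trace {n m : ℕ} (e : ℝ)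
    (B1 : Matrix (Fin (n + 1)) (Fin (n + 1)) ℝ)
    (B2 : Matrix (Fin (m + 1)) (Fin (m + 1)) ℝ)
    (h1 : B1.IsHermitian) (h2 : B2.IsHermitian)
    (hd1 : B1.det ≠ 0) (hd2 : B2.det ≠ 0)
    (hc : (splitMat e B1 B2).IsHermitian) :
    posEig hc = 1 + posEig h1 + posEig h2 ∧
      sigEig hc = sigEig h1 + sigEig h2 ∧
      (splitMat e B1 B2).trace = e + B1.trace + B2.trace :=
  splitMat_pos_sig_trace_general e B1 B2 h1 h2 hc
end

section
/- For the lens space L(p,1) with |p| ≥ 3, root lattice Q = A_1, plumbing tree a single vertex of weight p, and Weyl assignment ξ = (1_W): the (q,t)-series equals 2σ q^{(3σ−p)/4} if a ≡ 0 mod 2p; equals −σ q^{(3σ−p)/4 − 1/p} t^{±2} if a ≡ ±2 mod 2p; and equals 0 for all other residues a mod 2p. Here σ = sign(p). -/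
/-- `σ = sign(p)` for `p ≠ 0`. -/
def sgn (p : ℤ) : ℤ := if 0 < p then 1 else -1

/-- `π(B)`, the number of positive eigenvalues of the `1 × 1` framing matrix `(p)`. -/
def piB (p : ℤ) : ℕ := if 0 < p then 1 else 0

/-- Coefficient function (in the exponents `x` of `q` and `y` of `t`) of the
`(q,t)`-series `Y_τ(q,t)` of the lens space `L(p,1)`, for `Q = A₁` and Weyl
assignment `ξ = (1_W)`: the plumbing tree is a single degree-`0` vertex of weight
`p`, so `Y_τ(q,t) = (-1)^{π} q^{(3σ - p)/4} ∑_{ℓ ∈ a + 2pQ} c(ℓ) t^ℓ q^{-⟨ℓ,ℓ⟩/8}`,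
where (writing `ℓ = dα`) `c(dα) = [(z^α - z^{-α})²]_{dα}` equals `1` for `d = ±2`,
`-2` for `d = 0`, and `0` otherwise, `⟨ℓ,ℓ⟩ = 2d²/p`, and the `t`-exponent is `d`. -/
def lensCoeff (p a : ℤ) : ℚ × ℤ → ℚ := fun xy =>
  (-1 : ℚ) ^ piB p *
    (if (2 * p ∣ (xy.2 - a)) ∧
        xy.1 = (3 * (sgn p : ℚ) - (p : ℚ)) / 4 - (xy.2 : ℚ) ^ 2 / (4 * (p : ℚ)) then
      (if xy.2 = 2 ∨ xy.2 = -2 then 1 else if xy.2 = 0 then -2 else 0)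
    else 0)

lemma neg_one_pow_piB (p : ℤ) : (-1 : ℚ) ^ piB p = -(sgn p : ℚ) := by
  unfold piB sgn; split <;> norm_num

lemma not_dvd_small {p n : ℤ} (hp : 3 ≤ |p|) (h : 2 * p ∣ n) (hn : n ≠ 0)
    (hn4 : |n| ≤ 4) : False := by
  have h1 : |2 * p| ∣ |n| := (abs_dvd _ _).mpr ((dvd_abs _ _).mpr h)
  have h2 : |2 * p| ≤ |n| := Int.le_of_dvd (abs_pos.mpr hn) h1
  rw [abs_mul] at h2
  have h3 : |(2:ℤ)| = 2 := by norm_num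
  rw [h3] at h2
  linarith

/-- For the lens space `L(p,1)` with `|p| ≥ 3`, root lattice `Q = A₁`, plumbing
tree a single vertex of weight `p`, and Weyl assignment `ξ = (1_W)`: the
`(q,t)`-series equals `2σ q^{(3σ−p)/4}` if `a ≡ 0 mod 2p`; equals
`−σ q^{(3σ−p)/4 − 1/p} t^{±2}` if `a ≡ ±2 mod 2p`; and vanishes for all other
residues `a mod 2p`.  Here `σ = sign(p)`, and the series are compared via their
coefficient functions in the exponents `(x, y)` of `(q, t)`. -/
theorem lens_space_qt_series (p a : ℤ) (hp : 3 ≤ |p|) (ha : 2 ∣ a) :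
    ((2 * p ∣ a) → ∀ x y, lensCoeff p a (x, y) =
        if x = (3 * (sgn p : ℚ) - (p : ℚ)) / 4 ∧ y = 0 then 2 * (sgn p : ℚ) else 0) ∧
    ((2 * p ∣ (a - 2)) → ∀ x y, lensCoeff p a (x, y) =
        if x = (3 * (sgn p : ℚ) - (p : ℚ)) / 4 - 1 / (p : ℚ) ∧ y = 2 then
          -(sgn p : ℚ) else 0) ∧
    ((2 * p ∣ (a + 2)) → ∀ x y, lensCoeff p a (x, y) =
        if x = (3 * (sgn p : ℚ) - (p : ℚ)) / 4 - 1 / (p : ℚ) ∧ y = -2 then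
          -(sgn p : ℚ) else 0) ∧
    (¬ (2 * p ∣ a) → ¬ (2 * p ∣ (a - 2)) → ¬ (2 * p ∣ (a + 2)) →
      ∀ x y, lensCoeff p a (x, y) = 0) := by
  have hp0 : p ≠ 0 := by rcases abs_cases p with ⟨h1,h2⟩|⟨h1,h2⟩ <;> omega
  have hpQ : (p : ℚ) ≠ 0 := Int.cast_ne_zero.mpr hp0
  have hsq : ((2:ℤ):ℚ)^2 / (4 * (p:ℚ)) = 1 / (p:ℚ) := by
    push_cast; rw [div_mul_eq_div_div]; norm_num
  have hsqn : ((-2:ℤ):ℚ)^2 / (4 * (p:ℚ)) = 1 / (p:ℚ) := by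
    push_cast; rw [div_mul_eq_div_div]; norm_num
  refine ⟨?_, ?_, ?_, ?_⟩
  · -- a ≡ 0
    intro h x y
    unfold lensCoeff
    rw [neg_one_pow_piB]
    dsimp only
    rcases eq_or_ne y 0 with rfl | hy0
    · have hd : 2 * p ∣ ((0:ℤ) - a) := by
        have h1 : (0:ℤ) - a = -a := by ring
        rw [h1]; exact dvd_neg.mpr h
      by_cases hx : x = (3 * (sgn p : ℚ) - p) / 4
      · rw [if_pos ⟨hd, by rw [hx]; push_cast; ring⟩,
           if_neg (by norm_num : ¬((0:ℤ) = 2 ∨ (0:ℤ) = -2)), if_pos rfl,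
           if_pos ⟨hx, rfl⟩]
        ring
      · have hn1 : ¬ ((2 * p ∣ ((0:ℤ) - a)) ∧
            x = (3 * (sgn p : ℚ) - p) / 4 - ((0:ℤ):ℚ)^2 / (4 * (p:ℚ))) := by
          rintro ⟨-, hc⟩; exact hx (by rw [hc]; push_cast; ring)
        have hn2 : ¬ (x = (3 * (sgn p : ℚ) - p) / 4 ∧ (0:ℤ) = 0) := fun hc => hx hc.1
        rw [if_neg hn1, if_neg hn2]; ring
    · rcases eq_or_ne y 2 with rfl | hy2
      · have hnd : ¬ (2 * p ∣ ((2:ℤ) - a)) := by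
          intro hd
          have h3 := dvd_add hd h
          have h4 : (2:ℤ) - a + a = 2 := by ring
          rw [h4] at h3
          exact not_dvd_small hp h3 (by norm_num) (by norm_num)
        rw [if_neg (fun hc => hnd hc.1), if_neg (fun hc => hy0 hc.2)]; ring
      · rcases eq_or_ne y (-2) with rfl | hym
        · have hnd : ¬ (2 * p ∣ ((-2:ℤ) - a)) := by
            intro hd
            have h3 := dvd_add hd h
            have h4 : (-2:ℤ) - a + a = -2 := by ring
            rw [h4] at h3
            exact not_dvd_small hp h3 (by norm_num) (by norm_num)
          rw [if_neg (fun hc => hnd hc.1), if_neg (fun hc => hy0 hc.2)]; ring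
        · have hcoef : (if y = 2 ∨ y = -2 then (1:ℚ) else if y = 0 then -2 else 0) = 0 := by
            rw [if_neg (by tauto), if_neg hy0]
          have hD : ¬ (x = (3 * (sgn p : ℚ) - (p : ℚ)) / 4 ∧ y = 0) :=
            fun hc => hy0 hc.2
          rw [hcoef, ite_self, if_neg hD]; ring
  · -- a ≡ 2
    intro h x y
    unfold lensCoeff
    rw [neg_one_pow_piB]
    dsimp only
    rcases eq_or_ne y 2 with rfl | hy2
    · have hd : 2 * p ∣ ((2:ℤ) - a) := by
        have h1 : (2:ℤ) - a = -(a - 2) := by ring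
        rw [h1]; exact dvd_neg.mpr h
      by_cases hx : x = (3 * (sgn p : ℚ) - p) / 4 - 1 / (p:ℚ)
      · rw [if_pos ⟨hd, by rw [hx, hsq]⟩, if_pos (Or.inl rfl), if_pos ⟨hx, rfl⟩]
        ring
      · have hn1 : ¬ ((2 * p ∣ ((2:ℤ) - a)) ∧
            x = (3 * (sgn p : ℚ) - p) / 4 - ((2:ℤ):ℚ)^2 / (4 * (p:ℚ))) := by
          rintro ⟨-, hc⟩; exact hx (by rw [hc, hsq])
        have hn2 : ¬ (x = (3 * (sgn p : ℚ) - p) / 4 - 1 / (p:ℚ) ∧ (2:ℤ) = 2) :=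
          fun hc => hx hc.1
        rw [if_neg hn1, if_neg hn2]; ring
    · rcases eq_or_ne y 0 with rfl | hy0
      · have hnd : ¬ (2 * p ∣ ((0:ℤ) - a)) := by
          intro hd
          have h3 := dvd_add hd h
          have h4 : (0:ℤ) - a + (a - 2) = -2 := by ring
          rw [h4] at h3
          exact not_dvd_small hp h3 (by norm_num) (by norm_num)
        rw [if_neg (fun hc => hnd hc.1), if_neg (fun hc => hy2 hc.2)]; ring
      · rcases eq_or_ne y (-2) with rfl | hym
        · have hnd : ¬ (2 * p ∣ ((-2:ℤ) - a)) := by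
            intro hd
            have h3 := dvd_add hd h
            have h4 : (-2:ℤ) - a + (a - 2) = -4 := by ring
            rw [h4] at h3
            exact not_dvd_small hp h3 (by norm_num) (by norm_num)
          rw [if_neg (fun hc => hnd hc.1), if_neg (fun hc => hy2 hc.2)]; ring
        · have hcoef : (if y = 2 ∨ y = -2 then (1:ℚ) else if y = 0 then -2 else 0) = 0 := by
            rw [if_neg (by tauto), if_neg hy0]
          have hD : ¬ (x = (3 * (sgn p : ℚ) - (p : ℚ)) / 4 - 1 / (p:ℚ) ∧ y = 2) :=
            fun hc => hy2 hc.2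
          rw [hcoef, ite_self, if_neg hD]; ring
  · -- a ≡ -2
    intro h x y
    unfold lensCoeff
    rw [neg_one_pow_piB]
    dsimp only
    rcases eq_or_ne y (-2) with rfl | hym
    · have hd : 2 * p ∣ ((-2:ℤ) - a) := by
        have h1 : (-2:ℤ) - a = -(a + 2) := by ring
        rw [h1]; exact dvd_neg.mpr h
      by_cases hx : x = (3 * (sgn p : ℚ) - p) / 4 - 1 / (p:ℚ)
      · rw [if_pos ⟨hd, by rw [hx, hsqn]⟩, if_pos (Or.inr rfl), if_pos ⟨hx, rfl⟩]
        ring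
      · have hn1 : ¬ ((2 * p ∣ ((-2:ℤ) - a)) ∧
            x = (3 * (sgn p : ℚ) - p) / 4 - ((-2:ℤ):ℚ)^2 / (4 * (p:ℚ))) := by
          rintro ⟨-, hc⟩; exact hx (by rw [hc, hsqn])
        have hn2 : ¬ (x = (3 * (sgn p : ℚ) - p) / 4 - 1 / (p:ℚ) ∧ (-2:ℤ) = -2) :=
          fun hc => hx hc.1
        rw [if_neg hn1, if_neg hn2]; ring
    · rcases eq_or_ne y 0 with rfl | hy0
      · have hnd : ¬ (2 * p ∣ ((0:ℤ) - a)) := by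
          intro hd
          have h3 := dvd_add hd h
          have h4 : (0:ℤ) - a + (a + 2) = 2 := by ring
          rw [h4] at h3
          exact not_dvd_small hp h3 (by norm_num) (by norm_num)
        rw [if_neg (fun hc => hnd hc.1), if_neg (fun hc => hym hc.2)]; ring
      · rcases eq_or_ne y 2 with rfl | hy2
        · have hnd : ¬ (2 * p ∣ ((2:ℤ) - a)) := by
            intro hd
            have h3 := dvd_add hd h
            have h4 : (2:ℤ) - a + (a + 2) = 4 := by ring
            rw [h4] at h3
            exact not_dvd_small hp h3 (by norm_num) (by norm_num)
          rw [if_neg (fun hc => hnd hc.1), if_neg (fun hc => hym hc.2)]; ring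
        · have hcoef : (if y = 2 ∨ y = -2 then (1:ℚ) else if y = 0 then -2 else 0) = 0 := by
            rw [if_neg (by tauto), if_neg hy0]
          have hD : ¬ (x = (3 * (sgn p : ℚ) - (p : ℚ)) / 4 - 1 / (p:ℚ) ∧ y = -2) :=
            fun hc => hym hc.2
          rw [hcoef, ite_self, if_neg hD]; ring
  · -- other residues
    intro h0 h2 hm x y
    unfold lensCoeff
    rw [neg_one_pow_piB]
    dsimp only
    rcases eq_or_ne y 0 with rfl | hy0
    · have hnd : ¬ (2 * p ∣ ((0:ℤ) - a)) := by
        intro hd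
        have h1 : (0:ℤ) - a = -a := by ring
        rw [h1] at hd
        exact h0 (dvd_neg.mp hd)
      rw [if_neg (fun hc => hnd hc.1)]; ring
    · rcases eq_or_ne y 2 with rfl | hy2
      · have hnd : ¬ (2 * p ∣ ((2:ℤ) - a)) := by
          intro hd
          have h1 := dvd_neg.mpr hd
          have h4 : -((2:ℤ) - a) = a - 2 := by ring
          rw [h4] at h1
          exact h2 h1
        rw [if_neg (fun hc => hnd hc.1)]; ring
      · rcases eq_or_ne y (-2) with rfl | hym
        · have hnd : ¬ (2 * p ∣ ((-2:ℤ) - a)) := by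
            intro hd
            have h1 := dvd_neg.mpr hd
            have h4 : -((-2:ℤ) - a) = a + 2 := by ring
            rw [h4] at h1
            exact hm h1
          rw [if_neg (fun hc => hnd hc.1)]; ring
        · have hcoef : (if y = 2 ∨ y = -2 then (1:ℚ) else if y = 0 then -2 else 0) = 0 := by
            rw [if_neg (by tauto), if_neg hy0]
          rw [hcoef, ite_self]; ring
end
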